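/- For the set B₀ = [p] = {1,...,p} (so its complement is [p+1..p+q]), the unique feasible matching is M₀ = {(p-i+1, p+i) : i = 1,...,q}. That is, 𝓜(B₀) = {M₀}. -/

import Mathlib

open Finset

/-- The two-element set of endpoints of an arc `π = (i,j)`. -/
def arcSet (π : ℕ × ℕ) : Finset ℕ := {π.1, π.2}

/-- `M` is a feasible matching for the `p`-subset `A` of `[p+q] = {1,…,p+q}`:
`q` pairwise disjoint nested arcs `(i,j)`, `i<j`, each containing exactly one element
of `A` and one of its complement, with no free element covered by an arc's interval. -/
def IsFeasibleMatching (p q : ℕ) (A : Finset ℕ) (M : Finset (ℕ × ℕ)) : Prop :=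
  M.card = q ∧
  (∀ π ∈ M, 1 ≤ π.1 ∧ π.1 < π.2 ∧ π.2 ≤ p + q) ∧
  (∀ π ∈ M, ∀ π' ∈ M, π ≠ π' → Disjoint (arcSet π) (arcSet π')) ∧
  (∀ π ∈ M, (arcSet π ∩ A).card = 1 ∧
            (arcSet π ∩ (Finset.Icc 1 (p + q) \ A)).card = 1) ∧
  (∀ π ∈ M, ∀ π' ∈ M,
      Disjoint (Finset.Icc π.1 π.2) (Finset.Icc π'.1 π'.2) ∨
      Finset.Icc π.1 π.2 ⊆ Finset.Icc π'.1 π'.2 ∨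
      Finset.Icc π'.1 π'.2 ⊆ Finset.Icc π.1 π.2) ∧
  (∀ k ∈ Finset.Icc 1 (p + q), (∀ π ∈ M, k ∉ arcSet π) →
      ∀ π ∈ M, k ∉ Finset.Icc π.1 π.2)

open Classical in
/-- The number of members of the collection `𝒜` for which `M` is a feasible matching. -/
noncomputable def feasCount (p q : ℕ) (𝒜 : Finset (Finset ℕ)) (M : Finset (ℕ × ℕ)) : ℕ :=
  (𝒜.filter (fun A => IsFeasibleMatching p q A M)).card

/-- Two collections of `p`-subsets of `[p+q]` are balanced if every matching is a
feasible matching for equally many members of each. -/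
def BalancedPair (p q : ℕ) (𝒜 𝒜' : Finset (Finset ℕ)) : Prop :=
  ∀ M : Finset (ℕ × ℕ), feasCount p q 𝒜 M = feasCount p q 𝒜' M

/-!
Proof idea: for `A = [p]` every arc must have its left end in `[p]` and its right end in
`[p+1..p+q]`. Since no free element lies under an arc, the interval of an arc `(a, b)` is
exactly the union of the endpoints of the arcs nested in it, each contributing one element of
`A` and one of its complement. Hence `[a, p]` and `[p+1, b]` have equally many elements, i.e.
`a + b = 2p + 1`; together with `|M| = q` this pins `M` down to `M₀`.
-/

lemma mem_arcSet {π : ℕ × ℕ} {k : ℕ} : k ∈ arcSet π ↔ k = π.1 ∨ k = π.2 := by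
  simp [arcSet]

lemma arcSet_subset_Icc {π : ℕ × ℕ} (h : π.1 ≤ π.2) : arcSet π ⊆ Icc π.1 π.2 := by
  intro k hk
  rw [mem_arcSet] at hk
  rw [mem_Icc]
  omega

namespace IsFeasibleMatching

variable {p q : ℕ} {A : Finset ℕ} {M : Finset (ℕ × ℕ)} {π : ℕ × ℕ}

lemma arcSet_subset_Icc_of_mem (hM : IsFeasibleMatching p q A M) (hπ : π ∈ M) :
    arcSet π ⊆ Icc π.1 π.2 :=
  _root_.arcSet_subset_Icc (hM.2.1 π hπ).2.1.le

/-- A point under `π` is not free, so it is an endpoint of some arc `π'`; the two intervals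
meet there, and `π'` cannot strictly contain `π` since the point would be a shared endpoint. -/
lemma exists_nested_arc_of_mem_Icc (hM : IsFeasibleMatching p q A M) (hπ : π ∈ M) {k : ℕ}
    (hk : k ∈ Icc π.1 π.2) :
    ∃ π' ∈ M, k ∈ arcSet π' ∧ Icc π'.1 π'.2 ⊆ Icc π.1 π.2 := by
  obtain ⟨-, hbound, hdisj, -, hnest, hfree⟩ := hM
  have hk' : k ∈ Icc 1 (p + q) := by
    have := hbound π hπ
    rw [mem_Icc] at hk ⊢
    omega
  obtain ⟨π', hπ', hkπ'⟩ : ∃ π' ∈ M, k ∈ arcSet π' := by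
    by_contra! h
    exact hfree k hk' h π hπ hk
  refine ⟨π', hπ', hkπ', ?_⟩
  have hkπ'Icc := _root_.arcSet_subset_Icc (hbound π' hπ').2.1.le hkπ'
  rcases hnest π' hπ' π hπ with hd | hsub | hsup
  · exact absurd hk (disjoint_left.mp hd hkπ'Icc)
  · exact hsub
  · by_cases heq : π' = π
    · rw [heq]
    · have hπ1 := hsup (left_mem_Icc.mpr (hbound π hπ).2.1.le)
      have hπ2 := hsup (right_mem_Icc.mpr (hbound π hπ).2.1.le)
      rw [mem_Icc] at hk hπ1 hπ2
      rw [mem_arcSet] at hkπ'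
      have hshared : π.1 ∈ arcSet π' ∨ π.2 ∈ arcSet π' := by
        simp only [mem_arcSet]
        omega
      have hdisj' := disjoint_left.mp (hdisj π' hπ' π hπ heq)
      rcases hshared with h | h
      · exact absurd (mem_arcSet.mpr (Or.inl rfl)) (hdisj' h)
      · exact absurd (mem_arcSet.mpr (Or.inr rfl)) (hdisj' h)

lemma Icc_eq_biUnion_nested (hM : IsFeasibleMatching p q A M) (hπ : π ∈ M) :
    Icc π.1 π.2 = {π' ∈ M | Icc π'.1 π'.2 ⊆ Icc π.1 π.2}.biUnion arcSet := by
  ext k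
  simp only [mem_biUnion, mem_filter]
  constructor
  · intro hk
    obtain ⟨π', hπ', hkπ', hsub⟩ := hM.exists_nested_arc_of_mem_Icc hπ hk
    exact ⟨π', ⟨hπ', hsub⟩, hkπ'⟩
  · rintro ⟨π', ⟨hπ', hsub⟩, hkπ'⟩
    exact hsub (hM.arcSet_subset_Icc_of_mem hπ' hkπ')

lemma card_Icc_inter_eq_card_nested (hM : IsFeasibleMatching p q A M) (hπ : π ∈ M)
    {T : Finset ℕ} (hT : ∀ π' ∈ M, #(arcSet π' ∩ T) = 1) :
    #(Icc π.1 π.2 ∩ T) = #{π' ∈ M | Icc π'.1 π'.2 ⊆ Icc π.1 π.2} := by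
  conv_lhs => rw [hM.Icc_eq_biUnion_nested hπ]
  rw [biUnion_inter, card_biUnion]
  · rw [sum_congr rfl fun π' hπ' => hT π' (mem_filter.mp hπ').1, sum_const, smul_eq_mul,
      mul_one]
  · intro x hx y hy hxy
    exact (hM.2.2.1 x (mem_filter.mp hx).1 y (mem_filter.mp hy).1 hxy).mono
      inter_subset_left inter_subset_left

lemma card_Icc_inter_eq_card_Icc_inter_compl (hM : IsFeasibleMatching p q A M) (hπ : π ∈ M) :
    #(Icc π.1 π.2 ∩ A) = #(Icc π.1 π.2 ∩ (Icc 1 (p + q) \ A)) := by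
  rw [hM.card_Icc_inter_eq_card_nested hπ fun π' h => (hM.2.2.2.1 π' h).1,
    hM.card_Icc_inter_eq_card_nested hπ fun π' h => (hM.2.2.2.1 π' h).2]

lemma fst_le_and_lt_snd (hM : IsFeasibleMatching p q (Icc 1 p) M) (hπ : π ∈ M) :
    π.1 ≤ p ∧ p < π.2 := by
  obtain ⟨hA, hAc⟩ := hM.2.2.2.1 π hπ
  obtain ⟨x, hx⟩ := card_eq_one.mp hA
  obtain ⟨y, hy⟩ := card_eq_one.mp hAc
  have hxA : x ∈ arcSet π ∩ Icc 1 p := hx ▸ mem_singleton_self x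
  have hyAc : y ∈ arcSet π ∩ (Icc 1 (p + q) \ Icc 1 p) := hy ▸ mem_singleton_self y
  have := hM.2.1 π hπ
  simp only [mem_inter, mem_arcSet, mem_sdiff, mem_Icc] at hxA hyAc
  omega

lemma fst_add_snd (hM : IsFeasibleMatching p q (Icc 1 p) M) (hπ : π ∈ M) :
    π.1 + π.2 = 2 * p + 1 := by
  have hbal := hM.card_Icc_inter_eq_card_Icc_inter_compl hπ
  have hπp := hM.fst_le_and_lt_snd hπ
  have hb := hM.2.1 π hπ
  have hleft : Icc π.1 π.2 ∩ Icc 1 p = Icc π.1 p := by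
    ext k
    simp only [mem_inter, mem_Icc]
    omega
  have hright : Icc π.1 π.2 ∩ (Icc 1 (p + q) \ Icc 1 p) = Icc (p + 1) π.2 := by
    ext k
    simp only [mem_inter, mem_sdiff, mem_Icc]
    omega
  rw [hleft, hright, Nat.card_Icc, Nat.card_Icc] at hbal
  omega

end IsFeasibleMatching

/-- The matching `M₀` of the statement. -/
def innerMatching (p q : ℕ) : Finset (ℕ × ℕ) :=
  (Icc 1 q).image fun i => (p - i + 1, p + i)

lemma mem_innerMatching {p q : ℕ} (hpq : q ≤ p) {π : ℕ × ℕ} :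
    π ∈ innerMatching p q ↔ p < π.2 ∧ π.2 ≤ p + q ∧ π.1 + π.2 = 2 * p + 1 := by
  simp only [innerMatching, mem_image, mem_Icc]
  constructor
  · rintro ⟨i, hi, rfl⟩
    omega
  · intro h
    exact ⟨π.2 - p, by omega, Prod.ext (by omega) (by omega)⟩

lemma card_innerMatching (p q : ℕ) : #(innerMatching p q) = q := by
  rw [innerMatching, card_image_of_injOn fun i _ j _ h => by simpa using congrArg Prod.snd h,
    Nat.card_Icc, Nat.add_sub_cancel]

lemma isFeasibleMatching_innerMatching {p q : ℕ} (hpq : q ≤ p) :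
    IsFeasibleMatching p q (Icc 1 p) (innerMatching p q) := by
  simp only [IsFeasibleMatching, mem_innerMatching hpq]
  refine ⟨card_innerMatching p q, ?_, ?_, ?_, ?_, ?_⟩
  · intro π hπ
    omega
  · intro π hπ π' hπ' hne
    have : π.2 ≠ π'.2 := fun h => hne (Prod.ext (by omega) h)
    rw [disjoint_left]
    intro k hk hk'
    rw [mem_arcSet] at hk hk'
    omega
  · intro π hπ
    have hleft : arcSet π ∩ Icc 1 p = {π.1} := by
      ext k
      simp only [mem_inter, mem_arcSet, mem_Icc, mem_singleton]
      omega
    have hright : arcSet π ∩ (Icc 1 (p + q) \ Icc 1 p) = {π.2} := by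
      ext k
      simp only [mem_inter, mem_arcSet, mem_sdiff, mem_Icc, mem_singleton]
      omega
    rw [hleft, hright, card_singleton, card_singleton]
    exact ⟨rfl, rfl⟩
  · intro π hπ π' hπ'
    right
    rcases le_total π.2 π'.2 with h | h
    · left
      exact Icc_subset_Icc (by omega) h
    · right
      exact Icc_subset_Icc (by omega) h
  · intro k hk hfree π hπ hkπ
    rw [mem_Icc] at hk hkπ
    -- the arc of `M₀` with endpoint `k` is its mirror pair `{k, 2p+1-k}`
    refine hfree (min k (2 * p + 1 - k), max k (2 * p + 1 - k)) (by omega) (mem_arcSet.mpr ?_)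
    omega

theorem stmt8_general (p q : ℕ) (hpq : q ≤ p) :
    ∀ M : Finset (ℕ × ℕ),
      IsFeasibleMatching p q (Finset.Icc 1 p) M ↔
        M = (Finset.Icc 1 q).image (fun i => (p - i + 1, p + i)) := by
  intro M
  change _ ↔ M = innerMatching p q
  constructor
  · intro hM
    refine eq_of_subset_of_card_le (fun π hπ => ?_) (by rw [card_innerMatching, hM.1])
    have := hM.fst_le_and_lt_snd hπ
    exact (mem_innerMatching hpq).mpr ⟨this.2, (hM.2.1 π hπ).2.2, hM.fst_add_snd hπ⟩
  · rintro rfl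
    exact isFeasibleMatching_innerMatching hpq

/-- For `B₀ = [p] = {1,…,p}` (complement `[p+1..p+q]`), the unique feasible matching is
`M₀ = {(p-i+1, p+i) : i = 1,…,q}`, i.e. `𝓜(B₀) = {M₀}`. -/
theorem stmt8 (p q : ℕ) (hq : 1 ≤ q) (hpq : q ≤ p) :
    ∀ M : Finset (ℕ × ℕ),
      IsFeasibleMatching p q (Finset.Icc 1 p) M ↔
        M = (Finset.Icc 1 q).image (fun i => (p - i + 1, p + i)) :=
  stmt8_general p q hpq
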